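/- If M_1 and M_2 are matchings with |M_2| = |M_1| + 1, then the symmetric difference M_1 Δ M_2 contains at least one connected component which is an augmenting path with respect to M_1. -/

import Mathlib

variable {V : Type*} [DecidableEq V]

/-- `M` is a matching in the graph with edge set `E`: a set of edges of `E`
such that no two distinct edges share a vertex. -/
def IsMatching (E M : Finset (Sym2 V)) : Prop :=
  M ⊆ E ∧ ∀ e ∈ M, ∀ f ∈ M, e ≠ f → ∀ v, v ∈ e → v ∉ f

/-- The list of edges of the path given by the vertex list `l`. -/
def pathEdges (l : List V) : List (Sym2 V) :=
  (l.zip l.tail).map fun p => s(p.1, p.2)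

/-- `l` is (the vertex list of) an augmenting path with respect to the matching `M` in the
graph with edge set `E`: a path (distinct vertices, consecutive pairs forming edges of `E`)
with an odd number of edges, alternating between edges outside `M` (the even-indexed, in
particular the first and last) and edges of `M` (the odd-indexed), whose two endpoints are
unmatched by `M`. -/
def IsAugPath (E M : Finset (Sym2 V)) (l : List V) : Prop :=
  2 ≤ l.length ∧ l.Nodup ∧
    (∀ e ∈ pathEdges l, e ∈ E) ∧
    (pathEdges l).length % 2 = 1 ∧
    (∀ i (h : i < (pathEdges l).length), ((pathEdges l)[i] ∈ M ↔ i % 2 = 1)) ∧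
    (∀ e ∈ M, (∀ a, l.head? = some a → a ∉ e) ∧ (∀ a, l.getLast? = some a → a ∉ e))


/-!
Induction on `M₁`. As `M₁` covers at most `2|M₁| < 2|M₂|` vertices, some edge `vx ∈ M₂` has
`v` unmatched by `M₁`. If `x` is unmatched too, the edge `vx` alone is an augmenting component
of `M₁ Δ M₂`. Otherwise let `xy ∈ M₁`: deleting `xy` from `M₁` and `vx` from `M₂` preserves
`|M₂| = |M₁| + 1`, and induction yields an augmenting component `P` of the smaller symmetric
difference. Either `P` avoids `y` and is still a component of `M₁ Δ M₂`, or `y`, now unmatched,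
is an end of `P`, and `v x P` is the required path.
-/

section Paths

variable {α : Type*}

@[simp] lemma length_pathEdges (l : List α) : (pathEdges l).length = l.length - 1 := by
  simp [pathEdges]

lemma getElem_pathEdges {l : List α} {i : ℕ} (h : i < (pathEdges l).length) :
    (pathEdges l)[i] =
      s(l[i]'(by simp at h; omega), l[i + 1]'(by simp at h; omega)) := by
  simp [pathEdges]

lemma pathEdges_reverse (l : List α) : pathEdges l.reverse = (pathEdges l).reverse := by
  refine List.ext_getElem (by simp) fun i h₁ h₂ => ?_
  simp only [getElem_pathEdges, List.getElem_reverse, length_pathEdges]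
  rw [Sym2.eq_swap]
  congr 2 <;> simp at h₁ <;> omega

lemma mem_of_mem_pathEdges {l : List α} {e : Sym2 α} {v : α} (he : e ∈ pathEdges l)
    (hv : v ∈ e) : v ∈ l := by
  obtain ⟨i, hi, rfl⟩ := List.getElem_of_mem he
  rw [getElem_pathEdges, Sym2.mem_iff] at hv
  rcases hv with rfl | rfl <;> exact List.getElem_mem _

lemma exists_mem_pathEdges_of_mem {l : List α} (hl : 2 ≤ l.length) {v : α} (hv : v ∈ l) :
    ∃ e ∈ pathEdges l, v ∈ e := by
  obtain ⟨k, hk, rfl⟩ := List.getElem_of_mem hv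
  by_cases hlast : k + 1 < l.length
  · exact ⟨(pathEdges l)[k]'(by simp; omega), List.getElem_mem _, by simp [getElem_pathEdges]⟩
  · obtain ⟨j, rfl⟩ : ∃ j, k = j + 1 := ⟨k - 1, by omega⟩
    exact ⟨(pathEdges l)[j]'(by simp; omega), List.getElem_mem _, by simp [getElem_pathEdges]⟩

end Paths

section Matchings

variable {α : Type*} {E M : Finset (Sym2 α)}

lemma IsMatching.eq_of_mem (hM : IsMatching E M) {e f : Sym2 α} {v : α} (he : e ∈ M)
    (hf : f ∈ M) (hve : v ∈ e) (hvf : v ∈ f) : e = f :=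
  by_contra fun hne => hM.2 e he f hf hne v hve hvf

lemma IsMatching.subset {M' : Finset (Sym2 α)} (hM : IsMatching E M) (h : M' ⊆ M) :
    IsMatching E M' :=
  ⟨h.trans hM.1, fun e he f hf => hM.2 e (h he) f (h hf)⟩

end Matchings

lemma card_biUnion_toFinset_le (M : Finset (Sym2 V)) :
    (M.biUnion Sym2.toFinset).card ≤ 2 * M.card := by
  refine Finset.card_biUnion_le.trans ?_
  rw [mul_comm, ← smul_eq_mul]
  refine Finset.sum_le_card_nsmul _ _ _ fun e _ => ?_
  rw [Sym2.card_toFinset]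
  split <;> omega

lemma IsMatching.card_biUnion_toFinset {E M : Finset (Sym2 V)} (hM : IsMatching E M)
    (hloop : ∀ e ∈ M, ¬ e.IsDiag) : (M.biUnion Sym2.toFinset).card = 2 * M.card := by
  rw [Finset.card_biUnion, Finset.sum_congr rfl fun e he =>
    Sym2.card_toFinset_of_not_isDiag e (hloop e he), Finset.sum_const, smul_eq_mul, mul_comm]
  intro e he f hf hne
  simp only [Function.onFun, Finset.disjoint_left, Sym2.mem_toFinset]
  exact hM.2 e he f hf hne

lemma exists_mem_forall_notMem_of_card_lt {E M₁ M₂ : Finset (Sym2 V)}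
    (hsimple : ∀ e ∈ E, ¬ e.IsDiag) (hM₂ : IsMatching E M₂) (hcard : M₁.card < M₂.card) :
    ∃ v x, v ≠ x ∧ s(v, x) ∈ M₂ ∧ ∀ e ∈ M₁, v ∉ e := by
  have h₁ := card_biUnion_toFinset_le M₁
  have h₂ := hM₂.card_biUnion_toFinset fun e he => hsimple e (hM₂.1 he)
  have hnsub : ¬ M₂.biUnion Sym2.toFinset ⊆ M₁.biUnion Sym2.toFinset := fun h => by
    have := Finset.card_le_card h
    omega
  obtain ⟨v, hv₂, hv₁⟩ := Finset.not_subset.1 hnsub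
  simp only [Finset.mem_biUnion, Sym2.mem_toFinset, not_exists, not_and] at hv₁ hv₂
  obtain ⟨b, hb, hvb⟩ := hv₂
  obtain ⟨x, rfl⟩ := Sym2.mem_iff_exists.1 hvb
  exact ⟨v, x, fun h => hsimple _ (hM₂.1 hb) (Sym2.mk_isDiag_iff.2 h), hb, hv₁⟩

namespace IsAugPath

variable {α : Type*} {E M : Finset (Sym2 α)} {l : List α}

lemma reverse (h : IsAugPath E M l) : IsAugPath E M l.reverse := by
  obtain ⟨hlen, hnd, hE, hodd, halt, hends⟩ := h
  refine ⟨by simpa using hlen, List.nodup_reverse.2 hnd, by simpa [pathEdges_reverse] using hE,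
    by simpa [pathEdges_reverse] using hodd, fun i hi => ?_, fun e he => ?_⟩
  · simp only [pathEdges_reverse, List.length_reverse] at hi hodd ⊢
    rw [List.getElem_reverse, halt]
    omega
  · simpa [and_comm] using hends e he

/-- An inner vertex lies on two consecutive path edges, one of which is in `M`. -/
lemma head_or_getLast_of_forall_notMem (h : IsAugPath E M l) {v : α} (hv : v ∈ l)
    (hvM : ∀ e ∈ M, v ∉ e) : l.head? = some v ∨ l.getLast? = some v := by
  obtain ⟨k, hk, rfl⟩ := List.getElem_of_mem hv
  obtain ⟨hlen, -, -, -, halt, -⟩ := h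
  rcases k with _ | j
  · exact Or.inl (by rw [List.head?_eq_getElem?, List.getElem?_eq_getElem])
  by_cases hj : j + 2 = l.length
  · right
    rw [List.getLast?_eq_getElem?, show l.length - 1 = j + 1 by omega, List.getElem?_eq_getElem]
  have hcover : ∀ i (hi : i < (pathEdges l).length), i % 2 = 1 → l[j + 1] ∉ (pathEdges l)[i] :=
    fun i hi hodd hmem => hvM _ ((halt i hi).2 hodd) hmem
  rcases Nat.mod_two_eq_zero_or_one j with hpar | hpar
  · exact (hcover (j + 1) (by simp; omega) (by omega) (by simp [getElem_pathEdges])).elim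
  · exact (hcover j (by simp; omega) hpar (by simp [getElem_pathEdges])).elim

lemma pair {v x : α} (hvxE : s(v, x) ∈ E) (hvx : v ≠ x) (hv : ∀ e ∈ M, v ∉ e)
    (hx : ∀ e ∈ M, x ∉ e) : IsAugPath E M [v, x] := by
  refine ⟨by simp, by simpa using hvx, by simpa [pathEdges] using hvxE, rfl, fun i hi => ?_,
    fun e he => ⟨fun u hu => ?_, fun u hu => ?_⟩⟩
  · obtain rfl : i = 0 := by simpa using hi
    simpa [pathEdges] using fun h => hv _ h (Sym2.mem_mk_left v x)
  · cases hu
    exact hv e he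
  · cases hu
    exact hx e he

lemma of_erase [DecidableEq α] {a : Sym2 α} (h : IsAugPath E (M.erase a) l)
    (ha : ∀ u ∈ a, u ∉ l) : IsAugPath E M l := by
  obtain ⟨hlen, hnd, hE, hodd, halt, hends⟩ := h
  refine ⟨hlen, hnd, hE, hodd, fun i hi => ?_, fun e he => ?_⟩
  · have hne : (pathEdges l)[i] ≠ a := fun heq => ha _ (heq ▸ Sym2.out_fst_mem _)
      (mem_of_mem_pathEdges (List.getElem_mem hi) (Sym2.out_fst_mem _))
    rw [← halt i hi, Finset.mem_erase, and_iff_right hne]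
  · by_cases hea : e = a
    · subst hea
      exact ⟨fun u hu hue => ha u hue (List.mem_of_mem_head? hu),
        fun u hu hue => ha u hue (List.mem_of_mem_getLast? hu)⟩
    · exact hends e (Finset.mem_erase.2 ⟨hea, he⟩)

lemma cons_cons [DecidableEq α] {v x y : α} {t : List α}
    (h : IsAugPath E (M.erase s(x, y)) (y :: t)) (hxyM : s(x, y) ∈ M) (hxyE : s(x, y) ∈ E)
    (hvxE : s(v, x) ∈ E) (hvM : ∀ e ∈ M, v ∉ e) (hvx : v ≠ x) (hvt : v ∉ y :: t)
    (hxt : x ∉ y :: t) : IsAugPath E M (v :: x :: y :: t) := by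
  obtain ⟨hlen, hnd, hE, hodd, halt, hends⟩ := h
  have hpe : pathEdges (v :: x :: y :: t) = s(v, x) :: s(x, y) :: pathEdges (y :: t) := rfl
  have hvxM : s(v, x) ∉ M := fun h => hvM _ h (Sym2.mem_mk_left v x)
  refine ⟨by simp, List.nodup_cons.2 ⟨by simp_all, List.nodup_cons.2 ⟨hxt, hnd⟩⟩, ?_, ?_,
    fun i hi => ?_, fun e he => ⟨?_, ?_⟩⟩
  · rw [hpe]
    rintro e (_ | ⟨_, _ | ⟨_, he⟩⟩)
    exacts [hvxE, hxyE, hE e he]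
  · simp only [hpe, List.length_cons] at hodd ⊢
    omega
  · rcases i with _ | _ | i
    · simpa [hpe] using hvxM
    · simpa [hpe] using hxyM
    · have hne : (pathEdges (y :: t))[i]'(by simp [hpe] at hi ⊢; omega) ≠ s(x, y) := fun heq =>
        hxt (mem_of_mem_pathEdges (List.getElem_mem _) (heq ▸ Sym2.mem_mk_left x y))
      simp only [hpe, List.getElem_cons_succ]
      rw [show (i + 1 + 1) % 2 = i % 2 by omega, ← halt, Finset.mem_erase, and_iff_right hne]
  · rintro u ⟨⟩
    exact hvM e he
  · intro u hu hue
    rw [List.getLast?_cons_cons, List.getLast?_cons_cons] at hu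
    by_cases hexy : e = s(x, y)
    · subst hexy
      rcases Sym2.mem_iff.1 hue with rfl | rfl
      · exact hxt (List.mem_of_getLast? hu)
      · obtain _ | ⟨z, t⟩ := t
        · simp at hlen
        · rw [List.getLast?_cons_cons] at hu
          exact List.nodup_cons.1 hnd |>.1 (List.mem_of_getLast? hu)
    · exact (hends e (Finset.mem_erase.2 ⟨hexy, he⟩)).2 u hu hue

end IsAugPath

def IsComponentPath {α : Type*} (D : Finset (Sym2 α)) (l : List α) : Prop :=
  (∀ e ∈ pathEdges l, e ∈ D) ∧ ∀ e ∈ D, (∃ v ∈ l, v ∈ e) → e ∈ pathEdges l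

namespace IsComponentPath

variable {α : Type*} {D D' : Finset (Sym2 α)} {l : List α}

lemma reverse (h : IsComponentPath D l) : IsComponentPath D l.reverse := by
  simpa [IsComponentPath, pathEdges_reverse] using h

lemma notMem (h : IsComponentPath D l) (hl : 2 ≤ l.length) {u : α} (hu : ∀ e ∈ D, u ∉ e) :
    u ∉ l := fun hul =>
  let ⟨e, he, hue⟩ := exists_mem_pathEdges_of_mem hl hul
  hu e (h.1 e he) hue

lemma pair {v x : α} (hvx : s(v, x) ∈ D) (hD : ∀ e ∈ D, v ∈ e ∨ x ∈ e → e = s(v, x)) :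
    IsComponentPath D [v, x] := by
  refine ⟨by simpa [pathEdges] using hvx, fun e he ⟨u, hu, hue⟩ => ?_⟩
  simp only [List.mem_cons, List.not_mem_nil, or_false] at hu
  rcases hu with rfl | rfl <;> simp [pathEdges, hD e he (by simp [hue])]

lemma of_subset (h : IsComponentPath D' l) (hsub : D' ⊆ D)
    (hnew : ∀ e ∈ D, e ∉ D' → ∀ u ∈ e, u ∉ l) : IsComponentPath D l := by
  refine ⟨fun e he => hsub (h.1 e he), fun e he ⟨u, hul, hue⟩ => ?_⟩
  by_cases he' : e ∈ D'
  · exact h.2 e he' ⟨u, hul, hue⟩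
  · exact absurd hul (hnew e he he' u hue)

lemma cons_cons {v x y : α} {t : List α} (h : IsComponentPath D' (y :: t)) (hsub : D' ⊆ D)
    (hvx : s(v, x) ∈ D) (hxy : s(x, y) ∈ D)
    (hnew : ∀ e ∈ D, e ∉ D' → e = s(v, x) ∨ e = s(x, y))
    (hv : ∀ e ∈ D', v ∉ e) (hx : ∀ e ∈ D', x ∉ e) :
    IsComponentPath D (v :: x :: y :: t) := by
  have hpe : pathEdges (v :: x :: y :: t) = s(v, x) :: s(x, y) :: pathEdges (y :: t) := rfl
  rw [IsComponentPath, hpe]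
  refine ⟨?_, fun e he ⟨u, hu, hue⟩ => ?_⟩
  · rintro e (_ | ⟨_, _ | ⟨_, he⟩⟩)
    exacts [hvx, hxy, hsub (h.1 e he)]
  by_cases he' : e ∈ D'
  · rcases hu with _ | ⟨_, _ | ⟨_, hu⟩⟩
    exacts [absurd hue (hv e he'), absurd hue (hx e he'),
      .tail _ (.tail _ (h.2 e he' ⟨u, hu, hue⟩))]
  · rcases hnew e he he' with rfl | rfl
    exacts [.head _, .tail _ (.head _)]

end IsComponentPath

section SymmDiff

variable {α : Type*} [DecidableEq α]

lemma mem_symmDiff_erase_erase {s t : Finset α} {a b c : α} (ha : a ∉ t) (hb : b ∉ s) :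
    c ∈ symmDiff (s.erase a) (t.erase b) ↔ c ∈ symmDiff s t ∧ c ≠ a ∧ c ≠ b := by
  by_cases hca : c = a <;> by_cases hcb : c = b <;> simp_all [Finset.mem_symmDiff]

lemma notMem_of_mem_symmDiff_erase_erase {s t : Finset (Sym2 α)} {a b e : Sym2 α} {u : α}
    (hs : ∀ f ∈ s, u ∈ f → f = a) (ht : ∀ f ∈ t, u ∈ f → f = b)
    (he : e ∈ symmDiff (s.erase a) (t.erase b)) : u ∉ e := by
  intro hue
  rcases Finset.mem_symmDiff.1 he with ⟨he, -⟩ | ⟨he, -⟩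
  · exact Finset.ne_of_mem_erase he (hs e (Finset.mem_of_mem_erase he) hue)
  · exact Finset.ne_of_mem_erase he (ht e (Finset.mem_of_mem_erase he) hue)

end SymmDiff

theorem exists_augPath_of_unmatched_edge {E M₁ M₂ : Finset (Sym2 V)} {v x : V}
    (hM₂ : IsMatching E M₂) (hvx : v ≠ x) (hvx₂ : s(v, x) ∈ M₂) (hvM₁ : ∀ e ∈ M₁, v ∉ e)
    (hxM₁ : ∀ e ∈ M₁, x ∉ e) :
    ∃ l, IsAugPath E M₁ l ∧ IsComponentPath (symmDiff M₁ M₂) l := by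
  have hvx₁ : s(v, x) ∉ M₁ := fun h => hvM₁ _ h (Sym2.mem_mk_left v x)
  refine ⟨[v, x], .pair (hM₂.1 hvx₂) hvx hvM₁ hxM₁,
    .pair (Finset.mem_symmDiff.2 (Or.inr ⟨hvx₂, hvx₁⟩)) fun e he hvxe => ?_⟩
  have he₂ : e ∈ M₂ := (Finset.mem_symmDiff.1 he).elim (fun ⟨he₁, _⟩ => by
    rcases hvxe with h | h
    exacts [absurd h (hvM₁ e he₁), absurd h (hxM₁ e he₁)]) And.left
  rcases hvxe with h | h
  exacts [hM₂.eq_of_mem he₂ hvx₂ h (Sym2.mem_mk_left v x),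
    hM₂.eq_of_mem he₂ hvx₂ h (Sym2.mem_mk_right v x)]

theorem exists_augPath_of_erase {E M₁ M₂ : Finset (Sym2 V)} {v x y : V} {l : List V}
    (hM₁ : IsMatching E M₁) (hM₂ : IsMatching E M₂) (hvM₁ : ∀ e ∈ M₁, v ∉ e) (hvx : v ≠ x)
    (hvx₂ : s(v, x) ∈ M₂) (hxy₁ : s(x, y) ∈ M₁) (hl : IsAugPath E (M₁.erase s(x, y)) l)
    (hlc : IsComponentPath (symmDiff (M₁.erase s(x, y)) (M₂.erase s(v, x))) l) :
    ∃ l, IsAugPath E M₁ l ∧ IsComponentPath (symmDiff M₁ M₂) l := by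
  set D := symmDiff M₁ M₂
  set D' := symmDiff (M₁.erase s(x, y)) (M₂.erase s(v, x))
  have hvx₁ : s(v, x) ∉ M₁ := fun h => hvM₁ _ h (Sym2.mem_mk_left v x)
  have hxy₂ : s(x, y) ∉ M₂ := fun h => hvM₁ _ hxy₁ <|
    hM₂.eq_of_mem hvx₂ h (Sym2.mem_mk_right v x) (Sym2.mem_mk_left x y) ▸ Sym2.mem_mk_left v x
  have hvxD : s(v, x) ∈ D := Finset.mem_symmDiff.2 (Or.inr ⟨hvx₂, hvx₁⟩)
  have hxyD : s(x, y) ∈ D := Finset.mem_symmDiff.2 (Or.inl ⟨hxy₁, hxy₂⟩)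
  have hsub : D' ⊆ D := fun e he => ((mem_symmDiff_erase_erase hxy₂ hvx₁).1 he).1
  have hnew : ∀ e ∈ D, e ∉ D' → e = s(v, x) ∨ e = s(x, y) := fun e he he' => by
    rw [mem_symmDiff_erase_erase hxy₂ hvx₁] at he'
    tauto
  have hvD' : ∀ e ∈ D', v ∉ e := fun e => notMem_of_mem_symmDiff_erase_erase
    (fun f hf hvf => absurd hvf (hvM₁ f hf))
    (fun f hf hvf => hM₂.eq_of_mem hf hvx₂ hvf (Sym2.mem_mk_left v x))
  have hxD' : ∀ e ∈ D', x ∉ e := fun e => notMem_of_mem_symmDiff_erase_erase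
    (fun f hf hxf => hM₁.eq_of_mem hf hxy₁ hxf (Sym2.mem_mk_left x y))
    (fun f hf hxf => hM₂.eq_of_mem hf hvx₂ hxf (Sym2.mem_mk_right v x))
  by_cases hyl : y ∈ l
  · have hyM : ∀ e ∈ M₁.erase s(x, y), y ∉ e := fun e he hye => Finset.ne_of_mem_erase he
      (hM₁.eq_of_mem (Finset.mem_of_mem_erase he) hxy₁ hye (Sym2.mem_mk_right x y))
    have extend : ∀ l, IsAugPath E (M₁.erase s(x, y)) l → IsComponentPath D' l →
        l.head? = some y → ∃ l, IsAugPath E M₁ l ∧ IsComponentPath D l := by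
      intro l hl hlc hhead
      obtain ⟨t, rfl⟩ := List.head?_eq_some_iff.1 hhead
      exact ⟨v :: x :: y :: t,
        hl.cons_cons hxy₁ (hM₁.1 hxy₁) (hM₂.1 hvx₂) hvM₁ hvx (hlc.notMem hl.1 hvD')
          (hlc.notMem hl.1 hxD'),
        hlc.cons_cons hsub hvxD hxyD hnew hvD' hxD'⟩
    rcases hl.head_or_getLast_of_forall_notMem hyl hyM with h | h
    · exact extend l hl hlc h
    · exact extend l.reverse hl.reverse hlc.reverse (by rwa [List.head?_reverse])
  · have hvl := hlc.notMem hl.1 hvD'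
    have hxl := hlc.notMem hl.1 hxD'
    refine ⟨l, hl.of_erase fun u hu => ?_, hlc.of_subset hsub fun e he he' u hue => ?_⟩
    · rcases Sym2.mem_iff.1 hu with rfl | rfl
      exacts [hxl, hyl]
    · rcases hnew e he he' with rfl | rfl <;> rcases Sym2.mem_iff.1 hue with rfl | rfl
      exacts [hvl, hxl, hxl, hyl]

/-- If `M₁` and `M₂` are matchings with `|M₂| = |M₁| + 1`, then the symmetric difference
`M₁ Δ M₂` contains a connected component which is an augmenting path with respect to `M₁`:
an augmenting path all of whose edges lie in `M₁ Δ M₂` and which absorbs every edge of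
`M₁ Δ M₂` touching one of its vertices. -/
theorem symmDiff_contains_augPath (E M₁ M₂ : Finset (Sym2 V))
    (hsimple : ∀ e ∈ E, ¬ e.IsDiag)
    (hM₁ : IsMatching E M₁) (hM₂ : IsMatching E M₂)
    (hcard : M₂.card = M₁.card + 1) :
    ∃ l : List V, IsAugPath E M₁ l ∧
      (∀ e ∈ pathEdges l, e ∈ symmDiff M₁ M₂) ∧
      (∀ e ∈ symmDiff M₁ M₂, (∃ v ∈ l, v ∈ e) → e ∈ pathEdges l) := by
  induction M₁ using Finset.strongInduction generalizing M₂ with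
  | H M₁ ih =>
  obtain ⟨v, x, hvx, hvx₂, hvM₁⟩ := exists_mem_forall_notMem_of_card_lt hsimple hM₂
    (by omega : M₁.card < M₂.card)
  by_cases hxM₁ : ∀ e ∈ M₁, x ∉ e
  · exact exists_augPath_of_unmatched_edge hM₂ hvx hvx₂ hvM₁ hxM₁
  obtain ⟨a, ha, hxa⟩ : ∃ a ∈ M₁, x ∈ a := by simpa using hxM₁
  obtain ⟨y, rfl⟩ := Sym2.mem_iff_exists.1 hxa
  have hcard' : (M₂.erase s(v, x)).card = (M₁.erase s(x, y)).card + 1 := by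
    rw [Finset.card_erase_of_mem hvx₂, Finset.card_erase_of_mem ha]
    have := Finset.card_pos.2 ⟨_, ha⟩
    omega
  obtain ⟨l, hl, hlc⟩ := ih _ (Finset.erase_ssubset ha) _
    (hM₁.subset (Finset.erase_subset _ _)) (hM₂.subset (Finset.erase_subset _ _)) hcard'
  exact exists_augPath_of_erase hM₁ hM₂ hvM₁ hvx hvx₂ ha hl hlc
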